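/- arXiv:2006.10821 — 2 statements merged into one kernel-verified Lean document; each statement's English description precedes it below -/
import Mathlib

section
/- Let 𝒜 be a van Hove sequence. If f, g ∈ Bap²_𝒜(G), then the pointwise product fg belongs to Bap^1_𝒜(G). -/
open MeasureTheory Filter Topology
open scoped ENNReal Pointwise

noncomputable section

namespace MAP

section Defs

variable {G : Type*} [MeasurableSpace G] [TopologicalSpace G] [AddCommGroup G]

/-- The `K`-boundary `∂^K A` of a set `A`. -/
def kBoundary (K A : Set G) : Set G :=
  (closure (A + K) \ A) ∪ ((Aᶜ - K) ∩ closure A)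

/-- A van Hove sequence: nonempty relatively compact open sets whose `K`-boundaries
become negligible compared to their volume. -/
structure IsVanHove (θ : Measure G) (A : ℕ → Set G) : Prop where
  isOpen : ∀ n, IsOpen (A n)
  nonempty : ∀ n, (A n).Nonempty
  relCompact : ∀ n, IsCompact (closure (A n))
  boundary : ∀ K : Set G, IsCompact K →
    Tendsto (fun n => θ (kBoundary K (A n)) / θ (A n)) atTop (𝓝 0)

/-- `(1/θ(A)) ∫_A |f|^p`, valued in `ℝ≥0∞`. -/
def lpAvg (θ : Measure G) (A : Set G) (p : ℝ) (f : G → ℂ) : ℝ≥0∞ :=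
  (∫⁻ t in A, ENNReal.ofReal (‖f t‖ ^ p) ∂θ) / θ A

/-- The Besicovitch seminorm `‖f‖_{b,p,𝒜}`. -/
def besSN (θ : Measure G) (A : ℕ → Set G) (p : ℝ) (f : G → ℂ) : ℝ≥0∞ :=
  (limsup (fun n => lpAvg θ (A n) p f) atTop) ^ (1 / p)

/-- The Weyl seminorm `‖f‖_{w,p,𝒜}`. -/
def weylSN (θ : Measure G) (A : ℕ → Set G) (p : ℝ) (f : G → ℂ) : ℝ≥0∞ :=
  (limsup (fun n => ⨆ x : G, lpAvg θ (x +ᵥ A n) p f) atTop) ^ (1 / p)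

/-- Membership in `L^p_loc`. -/
def MemLpLoc (θ : Measure G) (p : ℝ) (f : G → ℂ) : Prop :=
  AEStronglyMeasurable f θ ∧
    ∀ K : Set G, IsCompact K → (∫⁻ t in K, ENNReal.ofReal (‖f t‖ ^ p) ∂θ) < ⊤

/-- A relatively dense subset of `G`. -/
def RelDense (S : Set G) : Prop :=
  ∃ K : Set G, IsCompact K ∧ ∀ g : G, ∃ t ∈ S, g - t ∈ K

/-- Mean almost periodicity of a function with respect to a van Hove sequence. -/
def MeanAP (θ : Measure G) (A : ℕ → Set G) (f : G → ℂ) : Prop :=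
  ∀ ε : ℝ, 0 < ε →
    RelDense {t : G | besSN θ A 1 (fun s => f s - f (s - t)) < ENNReal.ofReal ε}

/-- `C_c(G)`: continuous compactly supported functions. -/
def IsCc (φ : G → ℂ) : Prop := Continuous φ ∧ HasCompactSupport φ

/-- `(1/θ(A)) ∫_A f`, valued in `ℂ`. -/
def cAvg (θ : Measure G) (A : Set G) (f : G → ℂ) : ℂ :=
  (∫ t in A, f t ∂θ) / ((θ A).toReal : ℂ)

/-- `(1/θ(A)) ∫_{s+A} f`, valued in `ℂ`. -/
def shiftAvg (θ : Measure G) (A : Set G) (s : G) (f : G → ℂ) : ℂ :=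
  (∫ t in s +ᵥ A, f t ∂θ) / ((θ A).toReal : ℂ)

/-- `(1/θ(A)) ∫_{s+A} f` for a real-valued `f`. -/
def shiftAvgR (θ : Measure G) (A : Set G) (s : G) (f : G → ℝ) : ℝ :=
  (∫ t in s +ᵥ A, f t ∂θ) / (θ A).toReal

/-- The mean `M_𝒜(f)` exists and equals `c`. -/
def MeanTendsto (θ : Measure G) (A : ℕ → Set G) (f : G → ℂ) (c : ℂ) : Prop :=
  Tendsto (fun n => cAvg θ (A n) f) atTop (𝓝 c)

/-- The Dirac comb of a point set. -/
def diracComb (Λ : Set G) : Measure G := Measure.sum fun x : Λ => Measure.dirac (x : G)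

/-- Convolution `(μ * φ)(t) = ∫ φ(t - s) dμ(s)` of a positive measure with a function. -/
def convM (μ : Measure G) (φ : G → ℂ) : G → ℂ := fun t => ∫ s, φ (t - s) ∂μ

/-- Uniform discreteness of a point set. -/
def UnifDiscrete (Λ : Set G) : Prop :=
  ∃ U : Set G, IsOpen U ∧ (0 : G) ∈ U ∧
    ∀ x ∈ Λ, ∀ y ∈ Λ, x ≠ y → (x +ᵥ U) ∩ (y +ᵥ U) = ∅

/-- Delone sets: uniformly discrete and relatively dense. -/
def IsDelone (Λ : Set G) : Prop := UnifDiscrete Λ ∧ RelDense Λ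

end Defs

section CharDefs

variable (G : Type*) [TopologicalSpace G] [AddCommGroup G]

/-- The set of continuous characters of `G`, inside `C(G, ℂ)`. -/
def CharSet : Set C(G, ℂ) :=
  {χ | (∀ x, ‖χ x‖ = 1) ∧ ∀ x y, χ (x + y) = χ x * χ y}

/-- The dual group `Ĝ` of continuous characters, with the compact-open topology. -/
abbrev Char : Type _ := ↥(CharSet G)

instance : MeasurableSpace (Char G) := borel _

instance : BorelSpace (Char G) := ⟨rfl⟩

end CharDefs

section CharUse

variable {G : Type*} [MeasurableSpace G] [TopologicalSpace G] [AddCommGroup G]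

/-- Trigonometric polynomials: finite linear combinations of characters. -/
def IsTrigPoly (P : G → ℂ) : Prop :=
  ∃ (n : ℕ) (c : Fin n → ℂ) (χ : Fin n → Char G),
    P = fun x => ∑ i, c i * ((χ i : C(G, ℂ)) x)

/-- Besicovitch `p`-almost periodicity of a function. -/
def BapMem (θ : Measure G) (A : ℕ → Set G) (p : ℝ) (f : G → ℂ) : Prop :=
  MemLpLoc θ p f ∧ ∀ ε : ℝ, 0 < ε →
    ∃ P : G → ℂ, IsTrigPoly P ∧ besSN θ A p (fun x => f x - P x) < ENNReal.ofReal ε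

/-- Weyl `p`-almost periodicity of a function. -/
def WapMem (θ : Measure G) (A : ℕ → Set G) (p : ℝ) (f : G → ℂ) : Prop :=
  MemLpLoc θ p f ∧ ∀ ε : ℝ, 0 < ε →
    ∃ P : G → ℂ, IsTrigPoly P ∧ weylSN θ A p (fun x => f x - P x) < ENNReal.ofReal ε

/-- The Fourier–Bohr coefficient of `f` at `χ` along `A` exists and equals `a`. -/
def FBTendsto (θ : Measure G) (A : ℕ → Set G) (f : G → ℂ) (χ : Char G) (a : ℂ) : Prop :=
  MeanTendsto θ A (fun t => (starRingEnd ℂ) ((χ : C(G, ℂ)) t) * f t) a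

/-- `φ̌(χ) = ∫ χ(t) φ(t) dt`. -/
def checkFn (θ : Measure G) (φ : G → ℂ) (χ : Char G) : ℂ :=
  ∫ t, (χ : C(G, ℂ)) t * φ t ∂θ

/-- `(φ * ψ̃)(x) = ∫ φ(x - y) conj(ψ(-y)) dy`. -/
def tildeConv (θ : Measure G) (φ ψ : G → ℂ) : G → ℂ :=
  fun x => ∫ y, φ (x - y) * (starRingEnd ℂ) (ψ (-y)) ∂θ

/-- A pure point measure. -/
def PurePointM {X : Type*} [MeasurableSpace X] (σ : Measure X) : Prop :=
  ∀ B : Set X, MeasurableSet B → σ B = ∑' x : B, σ {(x : X)}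

end CharUse

section TB

variable (Γ : Type*) [MeasurableSpace Γ] [TopologicalSpace Γ] [AddCommGroup Γ]

/-- A translation bounded complex (Radon) measure, given by its total variation
measure together with a unimodular density (polar decomposition). -/
structure TBMeasure where
  tv : Measure Γ
  dens : Γ → ℂ
  dens_meas : Measurable dens
  dens_norm : ∀ x, ‖dens x‖ = 1
  bounded : ∀ K : Set Γ, IsCompact K → ∃ C : ℝ≥0∞, C ≠ ⊤ ∧ ∀ t : Γ, tv (t +ᵥ K) ≤ C

end TB

section TBUse

variable {G : Type*} [MeasurableSpace G] [TopologicalSpace G] [AddCommGroup G]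

/-- `∫ f dμ` for a translation bounded complex measure. -/
def TBMeasure.integral (μ : TBMeasure G) (f : G → ℂ) : ℂ := ∫ x, f x * μ.dens x ∂μ.tv

/-- `(μ * φ)(t) = ∫ φ(t - s) dμ(s)`. -/
def TBMeasure.conv (μ : TBMeasure G) (φ : G → ℂ) : G → ℂ :=
  fun t => ∫ s, φ (t - s) * μ.dens s ∂μ.tv

/-- `(1/θ(A_n)) · (μ|_{A_n} * ν̃|_{-A_n})(φ)`, the `n`-th Eberlein pairing of `μ` with `ν̃`. -/
def ebPair (θ : Measure G) (A : ℕ → Set G) (μ ν : TBMeasure G) (φ : G → ℂ) (n : ℕ) : ℂ :=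
  (∫ s in A n, ∫ u in A n, φ (s - u) * μ.dens s * (starRingEnd ℂ) (ν.dens u) ∂ν.tv ∂μ.tv) /
    ((θ (A n)).toReal : ℂ)

/-- Fourier–Bohr coefficient of a translation bounded measure along `A`. -/
def FBTendstoM (θ : Measure G) (A : ℕ → Set G) (μ : TBMeasure G) (χ : Char G) (a : ℂ) : Prop :=
  Tendsto (fun n =>
      (∫ t in A n, (starRingEnd ℂ) ((χ : C(G, ℂ)) t) * μ.dens t ∂μ.tv) /
        ((θ (A n)).toReal : ℂ))
    atTop (𝓝 a)

/-- `σ` is the Fourier transform of the positive definite measure `γ`: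
`∫_{Ĝ} |φ̌|² dσ = ∫_G (φ * φ̃) dγ` for all `φ ∈ C_c(G)`. -/
def IsFTOf (θ : Measure G) (γ : TBMeasure G) (σ : Measure (Char G)) : Prop :=
  ∀ φ : G → ℂ, IsCc φ → ∃ r : ℝ, 0 ≤ r ∧
    γ.integral (tildeConv θ φ φ) = (r : ℂ) ∧
    (∫⁻ χ, ENNReal.ofReal (‖checkFn θ φ χ‖ ^ 2) ∂σ) = ENNReal.ofReal r

end TBUse

section UniformDefs

variable {H : Type*} [UniformSpace H]

/-- `C_u(G)`: bounded uniformly continuous functions. -/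
def CuFun (f : H → ℂ) : Prop := UniformContinuous f ∧ ∃ C : ℝ, ∀ x, ‖f x‖ ≤ C

/-- Bohr (strong) almost periodicity. -/
def BohrAP [AddCommGroup H] (f : H → ℂ) : Prop :=
  CuFun f ∧ ∀ ε : ℝ, 0 < ε → RelDense {t : H | ∀ x, ‖f x - f (x - t)‖ ≤ ε}

end UniformDefs

end MAP

open MAP

/-! Approximate `f` and `g` in the Besicovitch 2-seminorm by trigonometric polynomials `P` and
`Q`; `PQ` is again a trigonometric polynomial, and Hölder's inequality for the averages gives
`‖fg - PQ‖_{b,1} ≤ ‖f - P‖_{b,2} ‖g‖_{b,2} + ‖P‖_{b,2} ‖g - Q‖_{b,2}` with `‖P‖_{b,2} ≤ sup |P|`.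
Instead of a triangle inequality for `‖·‖_{b,2}`, the factor `‖g‖_{b,2}` is controlled by
splitting `g = (g - Q₀) + Q₀` for one fixed trigonometric polynomial `Q₀`. -/

namespace ENNReal

variable {ι : Type*} {F : Filter ι}

lemma limsup_add_le' (u v : ι → ℝ≥0∞) : limsup (u + v) F ≤ limsup u F + limsup v F := by
  refine (limsup_le_iff).2 fun c hc => ?_
  obtain ⟨a, hu, b, hv, hab⟩ := exists_add_lt_of_add_lt hc
  filter_upwards [eventually_lt_of_limsup_lt hu, eventually_lt_of_limsup_lt hv] with n hun hvn
  exact (add_le_add hun.le hvn.le).trans_lt hab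

lemma limsup_rpow (u : ι → ℝ≥0∞) {y : ℝ} (hy : 0 < y) :
    limsup (fun n => u n ^ y) F = limsup u F ^ y :=
  ((orderIsoRpow y hy).limsup_apply (u := u) (f := F)).symm

end ENNReal

lemma MeasureTheory.lintegral_norm_mul_le_sqrt_mul_sqrt {α E : Type*} [MeasurableSpace α]
    [NormedRing E] {μ : Measure α} {u v : α → E}
    (hu : AEStronglyMeasurable u μ) (hv : AEStronglyMeasurable v μ) :
    ∫⁻ t, ENNReal.ofReal (‖u t * v t‖ ^ (1 : ℝ)) ∂μ ≤
      (∫⁻ t, ENNReal.ofReal (‖u t‖ ^ (2 : ℝ)) ∂μ) ^ (2⁻¹ : ℝ) *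
        (∫⁻ t, ENNReal.ofReal (‖v t‖ ^ (2 : ℝ)) ∂μ) ^ (2⁻¹ : ℝ) := by
  have hpow : ∀ (w : α → E) t,
      ENNReal.ofReal (‖w t‖ ^ (2 : ℝ)) = ENNReal.ofReal ‖w t‖ ^ (2 : ℝ) :=
    fun _ _ => (ENNReal.ofReal_rpow_of_nonneg (norm_nonneg _) zero_le_two).symm
  simp only [hpow, ← one_div]
  calc ∫⁻ t, ENNReal.ofReal (‖u t * v t‖ ^ (1 : ℝ)) ∂μ
      ≤ ∫⁻ t, ENNReal.ofReal ‖u t‖ * ENNReal.ofReal ‖v t‖ ∂μ := by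
        refine lintegral_mono fun t => ?_
        rw [Real.rpow_one, ← ENNReal.ofReal_mul (norm_nonneg _)]
        exact ENNReal.ofReal_le_ofReal (norm_mul_le _ _)
    _ ≤ _ := ENNReal.lintegral_mul_le_Lp_mul_Lq μ Real.HolderConjugate.two_two
        hu.norm.aemeasurable.ennreal_ofReal hv.norm.aemeasurable.ennreal_ofReal

namespace MAP

section TrigPoly

variable {G : Type*} [TopologicalSpace G] [AddCommGroup G]

lemma mul_mem_charSet {χ ψ : C(G, ℂ)} (hχ : χ ∈ CharSet G) (hψ : ψ ∈ CharSet G) :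
    χ * ψ ∈ CharSet G :=
  ⟨fun x => by simp [hχ.1 x, hψ.1 x],
    fun x y => by simp only [ContinuousMap.mul_apply, hχ.2 x y, hψ.2 x y]; ring⟩

lemma isTrigPoly_sum {ι : Type*} [Fintype ι] (c : ι → ℂ) (χ : ι → Char G) :
    IsTrigPoly fun x => ∑ i, c i * (χ i : C(G, ℂ)) x := by
  let e := Fintype.equivFin ι
  refine ⟨Fintype.card ι, c ∘ e.symm, χ ∘ e.symm, funext fun x => ?_⟩
  exact (e.symm.sum_comp fun i => c i * (χ i : C(G, ℂ)) x).symm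

lemma IsTrigPoly.mul {P Q : G → ℂ} (hP : IsTrigPoly P) (hQ : IsTrigPoly Q) :
    IsTrigPoly fun x => P x * Q x := by
  obtain ⟨n, c, χ, rfl⟩ := hP
  obtain ⟨m, d, ψ, rfl⟩ := hQ
  convert isTrigPoly_sum (fun ij : Fin n × Fin m => c ij.1 * d ij.2)
    (fun ij => (⟨_, mul_mem_charSet (χ ij.1).2 (ψ ij.2).2⟩ : Char G)) using 2 with x
  rw [Finset.sum_mul_sum, ← Finset.univ_product_univ, Finset.sum_product]
  refine Finset.sum_congr rfl fun i _ => Finset.sum_congr rfl fun j _ => ?_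
  simp only [ContinuousMap.mul_apply]
  ring

lemma IsTrigPoly.continuous {P : G → ℂ} (hP : IsTrigPoly P) : Continuous P := by
  obtain ⟨n, c, χ, rfl⟩ := hP
  fun_prop

lemma IsTrigPoly.exists_norm_le {P : G → ℂ} (hP : IsTrigPoly P) :
    ∃ C, 0 ≤ C ∧ ∀ x, ‖P x‖ ≤ C := by
  obtain ⟨n, c, χ, rfl⟩ := hP
  refine ⟨∑ i, ‖c i‖, by positivity, fun x => (norm_sum_le _ _).trans_eq ?_⟩
  simp only [norm_mul, (χ _).2.1 x, mul_one]

end TrigPoly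

section Seminorm

variable {G : Type*} [MeasurableSpace G] {θ : Measure G} {A : ℕ → Set G}

lemma lpAvg_eq_lintegral (S : Set G) (p : ℝ) (f : G → ℂ) :
    lpAvg θ S p f = ∫⁻ t, ENNReal.ofReal (‖f t‖ ^ p) ∂((θ S)⁻¹ • θ.restrict S) := by
  rw [lpAvg, lintegral_smul_measure, smul_eq_mul, ENNReal.div_eq_inv_mul]

lemma lpAvg_one_mul_le {S : Set G} {u v : G → ℂ}
    (hu : AEStronglyMeasurable u θ) (hv : AEStronglyMeasurable v θ) :
    lpAvg θ S 1 (fun x => u x * v x) ≤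
      lpAvg θ S 2 u ^ (2⁻¹ : ℝ) * lpAvg θ S 2 v ^ (2⁻¹ : ℝ) := by
  simp only [lpAvg_eq_lintegral]
  exact lintegral_norm_mul_le_sqrt_mul_sqrt (hu.restrict.smul_measure _)
    (hv.restrict.smul_measure _)

lemma lpAvg_one_add_le {S : Set G} {u : G → ℂ} (hu : AEStronglyMeasurable u θ) (v : G → ℂ) :
    lpAvg θ S 1 (fun x => u x + v x) ≤ lpAvg θ S 1 u + lpAvg θ S 1 v := by
  simp only [lpAvg_eq_lintegral, Real.rpow_one]
  calc ∫⁻ t, ENNReal.ofReal ‖u t + v t‖ ∂((θ S)⁻¹ • θ.restrict S)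
      ≤ ∫⁻ t, ENNReal.ofReal ‖u t‖ + ENNReal.ofReal ‖v t‖ ∂((θ S)⁻¹ • θ.restrict S) :=
        lintegral_mono fun t => by
          rw [← ENNReal.ofReal_add (norm_nonneg _) (norm_nonneg _)]
          exact ENNReal.ofReal_le_ofReal (norm_add_le _ _)
    _ = _ := lintegral_add_left' (hu.restrict.smul_measure _).norm.aemeasurable.ennreal_ofReal _

lemma lpAvg_le_of_norm_le {S : Set G} {p : ℝ} (hp : 0 ≤ p) {u : G → ℂ} {C : ℝ}
    (hC : ∀ x, ‖u x‖ ≤ C) : lpAvg θ S p u ≤ ENNReal.ofReal (C ^ p) := by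
  rw [lpAvg_eq_lintegral]
  calc ∫⁻ t, ENNReal.ofReal (‖u t‖ ^ p) ∂((θ S)⁻¹ • θ.restrict S)
      ≤ ∫⁻ _, ENNReal.ofReal (C ^ p) ∂((θ S)⁻¹ • θ.restrict S) :=
        lintegral_mono fun t => ENNReal.ofReal_le_ofReal
          (Real.rpow_le_rpow (norm_nonneg _) (hC t) hp)
    _ ≤ ENNReal.ofReal (C ^ p) := by
        rw [lintegral_const, Measure.smul_apply, Measure.restrict_apply_univ, smul_eq_mul]
        exact mul_le_of_le_one_right' (ENNReal.inv_mul_le_one _)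

lemma besSN_one_eq (u : G → ℂ) :
    besSN θ A 1 u = limsup (fun n => lpAvg θ (A n) 1 u) atTop := by
  simp [besSN]

lemma besSN_two_eq (u : G → ℂ) :
    besSN θ A 2 u = limsup (fun n => lpAvg θ (A n) 2 u ^ (2⁻¹ : ℝ)) atTop := by
  rw [besSN, ENNReal.limsup_rpow _ (by norm_num), one_div]

lemma besSN_one_mul_le {u v : G → ℂ} (hu : AEStronglyMeasurable u θ)
    (hv : AEStronglyMeasurable v θ) (hu2 : besSN θ A 2 u ≠ ⊤) (hv2 : besSN θ A 2 v ≠ ⊤) :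
    besSN θ A 1 (fun x => u x * v x) ≤ besSN θ A 2 u * besSN θ A 2 v := by
  rw [besSN_two_eq] at hu2 hv2 ⊢
  rw [besSN_two_eq, besSN_one_eq]
  exact (limsup_le_limsup (Eventually.of_forall fun _ => lpAvg_one_mul_le hu hv)).trans
    (ENNReal.limsup_mul_le' (Or.inr hv2) (Or.inl hu2))

lemma besSN_one_add_le {u : G → ℂ} (hu : AEStronglyMeasurable u θ) (v : G → ℂ) :
    besSN θ A 1 (fun x => u x + v x) ≤ besSN θ A 1 u + besSN θ A 1 v := by
  simp only [besSN_one_eq]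
  exact (limsup_le_limsup (Eventually.of_forall fun _ => lpAvg_one_add_le hu v)).trans
    (ENNReal.limsup_add_le' _ _)

lemma besSN_two_le_of_norm_le {u : G → ℂ} {C : ℝ} (hC₀ : 0 ≤ C) (hC : ∀ x, ‖u x‖ ≤ C) :
    besSN θ A 2 u ≤ ENNReal.ofReal C := by
  have hlim : limsup (fun n => lpAvg θ (A n) 2 u) atTop ≤ ENNReal.ofReal (C ^ (2 : ℝ)) :=
    limsup_le_of_le (by isBoundedDefault)
      (Eventually.of_forall fun _ => lpAvg_le_of_norm_le zero_le_two hC)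
  calc besSN θ A 2 u ≤ ENNReal.ofReal (C ^ (2 : ℝ)) ^ (1 / (2 : ℝ)) :=
        ENNReal.rpow_le_rpow hlim (by norm_num)
    _ = ENNReal.ofReal C := by
        rw [ENNReal.ofReal_rpow_of_nonneg (by positivity) (by norm_num), ← Real.rpow_mul hC₀]
        norm_num

lemma besSN_one_mul_sub_mul_le {f g P Q Q₀ : G → ℂ}
    (hfP : AEStronglyMeasurable (fun x => f x - P x) θ)
    (hgQ₀ : AEStronglyMeasurable (fun x => g x - Q₀ x) θ) (hQ₀ : AEStronglyMeasurable Q₀ θ) :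
    besSN θ A 1 (fun x => f x * g x - P x * Q x) ≤
      besSN θ A 1 (fun x => (f x - P x) * (g x - Q₀ x)) +
        besSN θ A 1 (fun x => (f x - P x) * Q₀ x) + besSN θ A 1 (fun x => P x * (g x - Q x)) := by
  have hsplit : (fun x => f x * g x - P x * Q x) = fun x =>
      ((f x - P x) * (g x - Q₀ x) + (f x - P x) * Q₀ x) + P x * (g x - Q x) := by
    funext x; ring
  rw [hsplit]
  calc _ ≤ besSN θ A 1 (fun x => (f x - P x) * (g x - Q₀ x) + (f x - P x) * Q₀ x) +
        besSN θ A 1 (fun x => P x * (g x - Q x)) :=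
        besSN_one_add_le ((hfP.mul hgQ₀).add (hfP.mul hQ₀)) _
    _ ≤ _ := add_le_add_left (besSN_one_add_le (hfP.mul hgQ₀) _) _

end Seminorm

section Product

variable {G : Type*} [MeasurableSpace G] [TopologicalSpace G] {θ : Measure G} {A : ℕ → Set G}

lemma MemLpLoc.mul {f g : G → ℂ} (hf : MemLpLoc θ 2 f) (hg : MemLpLoc θ 2 g) :
    MemLpLoc θ 1 (fun x => f x * g x) := by
  refine ⟨hf.1.mul hg.1, fun K hK => ?_⟩
  refine (lintegral_norm_mul_le_sqrt_mul_sqrt hf.1.restrict hg.1.restrict).trans_lt ?_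
  exact ENNReal.mul_lt_top (ENNReal.rpow_lt_top_of_nonneg (by norm_num) (hf.2 K hK).ne)
    (ENNReal.rpow_lt_top_of_nonneg (by norm_num) (hg.2 K hK).ne)

variable [AddCommGroup G] [OpensMeasurableSpace G]

lemma IsTrigPoly.aestronglyMeasurable {P : G → ℂ} (hP : IsTrigPoly P) :
    AEStronglyMeasurable P θ :=
  hP.continuous.aestronglyMeasurable

lemma BapMem.mul {f g : G → ℂ} (hf : BapMem θ A 2 f) (hg : BapMem θ A 2 g) :
    BapMem θ A 1 (fun x => f x * g x) := by
  refine ⟨hf.1.mul hg.1, fun ε hε => ?_⟩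
  obtain ⟨Q₀, hQ₀, hgQ₀⟩ := hg.2 1 one_pos
  obtain ⟨C₀, hC₀, hQ₀C⟩ := hQ₀.exists_norm_le
  obtain ⟨P, hP, hfP⟩ := hf.2 (ε / (2 * (1 + C₀))) (by positivity)
  obtain ⟨C, hC, hPC⟩ := hP.exists_norm_le
  obtain ⟨Q, hQ, hgQ⟩ := hg.2 (ε / (2 * (C + 1))) (by positivity)
  refine ⟨fun x => P x * Q x, hP.mul hQ, ?_⟩
  have hfP_meas := hf.1.1.sub (hP.aestronglyMeasurable (θ := θ))
  have hgQ₀_meas := hg.1.1.sub (hQ₀.aestronglyMeasurable (θ := θ))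
  have hQ₀₂ := besSN_two_le_of_norm_le (θ := θ) (A := A) hC₀ hQ₀C
  have hP₂ := besSN_two_le_of_norm_le (θ := θ) (A := A) hC hPC
  have hfirst : besSN θ A 1 (fun x => (f x - P x) * (g x - Q₀ x)) +
      besSN θ A 1 (fun x => (f x - P x) * Q₀ x) ≤ ENNReal.ofReal (ε / 2) := by
    calc _ ≤ ENNReal.ofReal (ε / (2 * (1 + C₀))) * ENNReal.ofReal 1 +
          ENNReal.ofReal (ε / (2 * (1 + C₀))) * ENNReal.ofReal C₀ := by
          gcongr
          · exact (besSN_one_mul_le hfP_meas hgQ₀_meas hfP.ne_top hgQ₀.ne_top).trans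
              (mul_le_mul' hfP.le hgQ₀.le)
          · exact (besSN_one_mul_le hfP_meas hQ₀.aestronglyMeasurable hfP.ne_top
              (hQ₀₂.trans_lt ENNReal.ofReal_lt_top).ne).trans (mul_le_mul' hfP.le hQ₀₂)
      _ = ENNReal.ofReal (ε / 2) := by
          rw [← mul_add, ← ENNReal.ofReal_add zero_le_one hC₀,
            ← ENNReal.ofReal_mul (by positivity)]
          congr 1
          field_simp
  have hsecond : besSN θ A 1 (fun x => P x * (g x - Q x)) < ENNReal.ofReal (ε / 2) := by
    calc _ ≤ ENNReal.ofReal C * ENNReal.ofReal (ε / (2 * (C + 1))) :=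
          (besSN_one_mul_le hP.aestronglyMeasurable (hg.1.1.sub hQ.aestronglyMeasurable)
            (hP₂.trans_lt ENNReal.ofReal_lt_top).ne hgQ.ne_top).trans (mul_le_mul' hP₂ hgQ.le)
      _ < ENNReal.ofReal (ε / 2) := by
          rw [← ENNReal.ofReal_mul hC, ENNReal.ofReal_lt_ofReal_iff (by positivity),
            mul_div_assoc', div_lt_div_iff₀ (by positivity) two_pos]
          nlinarith
  calc _ ≤ _ := besSN_one_mul_sub_mul_le hfP_meas hgQ₀_meas hQ₀.aestronglyMeasurable
    _ < ENNReal.ofReal (ε / 2) + ENNReal.ofReal (ε / 2) :=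
        ENNReal.add_lt_add_of_le_of_lt (hfirst.trans_lt ENNReal.ofReal_lt_top).ne hfirst hsecond
    _ = ENNReal.ofReal ε := by
        rw [← ENNReal.ofReal_add (by positivity) (by positivity), add_halves]

end Product

end MAP

theorem statement10_general
    {G : Type*} [AddCommGroup G] [TopologicalSpace G]
    [MeasurableSpace G] [BorelSpace G]
    (θ : Measure G)
    (A : ℕ → Set G)
    (f g : G → ℂ) (hf : BapMem θ A 2 f) (hg : BapMem θ A 2 g) :
    BapMem θ A 1 (fun x => f x * g x) :=
  hf.mul hg

theorem statement10
    {G : Type*} [AddCommGroup G] [TopologicalSpace G] [IsTopologicalAddGroup G]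
    [LocallyCompactSpace G] [SigmaCompactSpace G] [T2Space G]
    [MeasurableSpace G] [BorelSpace G]
    (θ : Measure G) [θ.IsAddHaarMeasure]
    (A : ℕ → Set G) (hA : IsVanHove θ A)
    (f g : G → ℂ) (hf : BapMem θ A 2 f) (hg : BapMem θ A 2 g) :
    BapMem θ A 1 (fun x => f x * g x) :=
  statement10_general θ A f g hf hg
end
end

section
/- Let f ∈ L²_loc(G) and let 𝒜 be a van Hove sequence. Then f ∈ Bap²_𝒜(G) if and only if the following three conditions hold: (a) for each χ ∈ Ĝ the Fourier–Bohr coefficient a_χ^𝒜(f) exists; (b) the mean M_𝒜(|f|²) exists; and (c) the Parseval equality M_𝒜(|f|²) = Σ_{χ∈Ĝ} |a_χ^𝒜(f)|² holds (in particular a_χ^𝒜(f) ≠ 0 for at most countably many χ and the family (|a_χ^𝒜(f)|²)_{χ∈Ĝ} is summable). -/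
/-
Averages over `A n` are integrals against the probability measures `θ[|A n]`, and `‖g‖_{b,2,𝒜}`
is the `limsup` of the norms of `g` in the Hilbert spaces `L²(θ[|A n])`. In these spaces the
characters are asymptotically orthonormal: translating `A n` by `s` multiplies the integral of a
character `g` by `g s`, but by the van Hove property changes it only by `o(θ (A n))`, so the
average of `g` tends to `0` unless `g = 1`. For such a family, if `⟪e n i, x n⟫ → a i` and
`‖x n‖² → M`, then `‖x n - ∑ d i • e n i‖² → M - ∑ ‖a i‖² + ∑ ‖d i - a i‖²`, which turns
approximability of `x` by finite combinations into Parseval's identity `∑ ‖a i‖² = M`.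
-/

open MeasureTheory Filter Topology
open scoped ENNReal Pointwise

noncomputable section

open MAP

open scoped InnerProductSpace ComplexConjugate ProbabilityTheory symmDiff

theorem exists_tendsto_of_forall_eventually_dist_lt {X : Type*} [PseudoMetricSpace X]
    [CompleteSpace X] {u : ℕ → X}
    (h : ∀ ε > 0, ∃ v : ℕ → X, (∃ l, Tendsto v atTop (𝓝 l)) ∧ ∀ᶠ n in atTop, dist (u n) (v n) < ε) :
    ∃ l, Tendsto u atTop (𝓝 l) := by
  refine cauchySeq_tendsto_of_complete (Metric.cauchySeq_iff.2 fun ε hε => ?_)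
  obtain ⟨v, ⟨l, hv⟩, huv⟩ := h (ε / 4) (by positivity)
  obtain ⟨N, hN⟩ := eventually_atTop.1
    (huv.and (hv.eventually (Metric.ball_mem_nhds l (by positivity : 0 < ε / 4))))
  refine ⟨N, fun m hm n hn => ?_⟩
  obtain ⟨hm₁, hm₂⟩ := hN m hm
  obtain ⟨hn₁, hn₂⟩ := hN n hn
  linarith [dist_triangle4 (u m) (v m) (v n) (u n), dist_triangle (v m) l (v n),
    dist_comm (v n) l, dist_comm (v n) (u n)]

theorem hasSum_iff_tsum_ofReal_eq {α : Type*} {f : α → ℝ} (hf : ∀ i, 0 ≤ f i) {M : ℝ}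
    (hM : 0 ≤ M) : HasSum f M ↔ ∑' i, ENNReal.ofReal (f i) = ENNReal.ofReal M := by
  refine ⟨fun h => by rw [← ENNReal.ofReal_tsum_of_nonneg hf h.summable, h.tsum_eq], fun h => ?_⟩
  have hs : Summable f := (ENNReal.summable_toReal (h ▸ ENNReal.ofReal_ne_top)).congr
    fun i => ENNReal.toReal_ofReal (hf i)
  rw [← ENNReal.ofReal_tsum_of_nonneg hf hs, ENNReal.ofReal_eq_ofReal_iff (tsum_nonneg hf) hM] at h
  exact h ▸ hs.hasSum

section Integrals

variable {α : Type*} [MeasurableSpace α] {μ : Measure α}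

theorem enorm_setIntegral_sub_setIntegral_le {E : Type*} [NormedAddCommGroup E] [NormedSpace ℝ E]
    {g : α → E} (hg : AEStronglyMeasurable g μ) (hg1 : ∀ x, ‖g x‖ ≤ 1) {S T : Set α}
    (hS : MeasurableSet S) (hT : MeasurableSet T) (hSμ : μ S ≠ ⊤) (hTμ : μ T ≠ ⊤) :
    ‖∫ x in S, g x ∂μ - ∫ x in T, g x ∂μ‖ₑ ≤ μ (S ∆ T) := by
  have hint : ∀ {U : Set α}, MeasurableSet U → μ U ≠ ⊤ → Integrable (U.indicator g) μ :=
    fun hU hUμ => (integrable_indicator_iff hU).2 <|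
      IntegrableOn.of_bound hUμ.lt_top hg.restrict 1 (ae_of_all _ hg1)
  rw [← integral_indicator hS, ← integral_indicator hT, ← integral_sub (hint hS hSμ) (hint hT hTμ),
    ← lintegral_indicator_one (hS.symmDiff hT)]
  refine (enorm_integral_le_lintegral_enorm _).trans (lintegral_mono fun x => ?_)
  rw [← Set.apply_indicator_symmDiff enorm_neg, enorm_indicator_eq_indicator_enorm]
  exact Set.indicator_le_indicator (ofReal_norm (g x) ▸ ENNReal.ofReal_le_one.2 (hg1 x))

theorem inner_toLp_toLp {g h : α → ℂ} (hg : MemLp g 2 μ) (hh : MemLp h 2 μ) :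
    ⟪hg.toLp g, hh.toLp h⟫_ℂ = ∫ x, conj (g x) * h x ∂μ := by
  rw [L2.inner_def]
  refine integral_congr_ae ?_
  filter_upwards [hg.coeFn_toLp, hh.coeFn_toLp] with x hgx hhx
  rw [hgx, hhx, RCLike.inner_apply']

theorem norm_toLp_sq {g : α → ℂ} (hg : MemLp g 2 μ) : ‖hg.toLp g‖ ^ 2 = ∫ x, ‖g x‖ ^ 2 ∂μ := by
  have hconj : ∀ x, conj (g x) * g x = ((‖g x‖ ^ 2 : ℝ) : ℂ) := fun x => by
    rw [RCLike.conj_mul]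
    norm_cast
  rw [← @inner_self_eq_norm_sq ℂ, inner_toLp_toLp]
  simp only [hconj, RCLike.re_to_complex]
  rw [integral_complex_ofReal, Complex.ofReal_re]

end Integrals

theorem setIntegral_vadd_of_map_add {G : Type*} [AddCommGroup G] [MeasurableSpace G]
    [MeasurableAdd G] {θ : Measure G} [θ.IsAddLeftInvariant] {g : G → ℂ}
    (hg : ∀ x y, g (x + y) = g x * g y) (s : G) (S : Set G) :
    ∫ x in s +ᵥ S, g x ∂θ = g s * ∫ x in S, g x ∂θ := by
  have hpre : (fun x => s + x) ⁻¹' (s +ᵥ S) = S := by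
    ext x
    simp [Set.mem_vadd_set_iff_neg_vadd_mem]
  rw [← (measurePreserving_add_left θ s).setIntegral_preimage_emb
    (MeasurableEquiv.addLeft s).measurableEmbedding, hpre]
  simp_rw [hg s]
  exact integral_const_mul _ _

section AsymptoticallyOrthonormal

variable {E : ℕ → Type*} [∀ n, NormedAddCommGroup (E n)] [∀ n, InnerProductSpace ℂ (E n)]
  {ι : Type*} [DecidableEq ι]

def IsAsymptOrthonormal (e : ∀ n, ι → E n) : Prop :=
  ∀ i j, Tendsto (fun n => ⟪e n i, e n j⟫_ℂ) atTop (𝓝 (if i = j then 1 else 0))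

def IsAsymptApprox (e : ∀ n, ι → E n) (x : ∀ n, E n) : Prop :=
  ∀ ε > 0, ∃ (F : Finset ι) (d : ι → ℂ), ∀ᶠ n in atTop, ‖x n - ∑ i ∈ F, d i • e n i‖ < ε

namespace IsAsymptOrthonormal

variable {e : ∀ n, ι → E n} {x : ∀ n, E n} {a : ι → ℂ} {M : ℝ} (he : IsAsymptOrthonormal e)
include he

theorem tendsto_inner_sum_smul (i : ι) (F : Finset ι) (d : ι → ℂ) :
    Tendsto (fun n => ⟪e n i, ∑ j ∈ F, d j • e n j⟫_ℂ) atTop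
      (𝓝 (∑ j ∈ F, d j * if i = j then 1 else 0)) := by
  simp only [inner_sum, inner_smul_right]
  exact tendsto_finsetSum _ fun j _ => (he i j).const_mul (d j)

theorem tendsto_norm_sq (i : ι) : Tendsto (fun n => ‖e n i‖ ^ 2) atTop (𝓝 1) := by
  simpa only [Function.comp_def, @inner_self_eq_norm_sq ℂ, ↓reduceIte, RCLike.one_re] using
    (RCLike.continuous_re.tendsto _).comp (he i i)

theorem eventually_norm_lt_two (i : ι) : ∀ᶠ n in atTop, ‖e n i‖ < 2 := by
  filter_upwards [(he.tendsto_norm_sq i).eventually (gt_mem_nhds (by norm_num : (1 : ℝ) < 4))]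
    with n hn
  nlinarith [norm_nonneg (e n i)]

theorem tendsto_norm_sub_sum_smul_sq
    (ha : ∀ i, Tendsto (fun n => ⟪e n i, x n⟫_ℂ) atTop (𝓝 (a i)))
    (hM : Tendsto (fun n => ‖x n‖ ^ 2) atTop (𝓝 M)) (F : Finset ι) (d : ι → ℂ) :
    Tendsto (fun n => ‖x n - ∑ i ∈ F, d i • e n i‖ ^ 2) atTop
      (𝓝 (M - ∑ i ∈ F, ‖a i‖ ^ 2 + ∑ i ∈ F, ‖d i - a i‖ ^ 2)) := by
  set y := fun n => ∑ i ∈ F, d i • e n i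
  have hyx : Tendsto (fun n => ⟪y n, x n⟫_ℂ) atTop (𝓝 (∑ i ∈ F, conj (d i) * a i)) := by
    simp only [y, sum_inner, inner_smul_left]
    exact tendsto_finsetSum _ fun i _ => (ha i).const_mul _
  have hyy : Tendsto (fun n => ⟪y n, y n⟫_ℂ) atTop (𝓝 (∑ i ∈ F, conj (d i) * d i)) := by
    have h := tendsto_finsetSum F fun i _ =>
      (he.tendsto_inner_sum_smul i F d).const_mul (conj (d i))
    simp only [← inner_smul_left, ← sum_inner, mul_ite, mul_one, mul_zero,
      Finset.sum_ite_eq] at h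
    convert h using 2
    exact (Finset.sum_congr rfl fun i hi => if_pos hi).symm
  have hexpand : ∀ n, ‖x n - y n‖ ^ 2
      = ‖x n‖ ^ 2 - 2 * RCLike.re ⟪y n, x n⟫_ℂ + RCLike.re ⟪y n, y n⟫_ℂ := fun n => by
    rw [@norm_sub_sq ℂ, ← inner_conj_symm, RCLike.conj_re, @inner_self_eq_norm_sq ℂ]
  have hlim := (hM.sub (((RCLike.continuous_re.tendsto _).comp hyx).const_mul 2)).add
    ((RCLike.continuous_re.tendsto _).comp hyy)
  simp only [Function.comp_def, ← hexpand] at hlim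
  convert hlim using 2
  have hterm : ∀ i, ‖d i - a i‖ ^ 2
      = ‖a i‖ ^ 2 - 2 * (conj (d i) * a i).re + (conj (d i) * d i).re := fun i => by
    simp only [Complex.sq_norm, Complex.normSq_apply, Complex.mul_re, Complex.conj_re,
      Complex.conj_im, Complex.sub_re, Complex.sub_im]
    ring
  simp only [RCLike.re_to_complex, Complex.re_sum, Finset.mul_sum, hterm,
    Finset.sum_add_distrib, Finset.sum_sub_distrib]
  ring

theorem tendsto_norm_sub_sum_coeff_smul_sq
    (ha : ∀ i, Tendsto (fun n => ⟪e n i, x n⟫_ℂ) atTop (𝓝 (a i)))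
    (hM : Tendsto (fun n => ‖x n‖ ^ 2) atTop (𝓝 M)) (F : Finset ι) :
    Tendsto (fun n => ‖x n - ∑ i ∈ F, a i • e n i‖ ^ 2) atTop (𝓝 (M - ∑ i ∈ F, ‖a i‖ ^ 2)) := by
  simpa using he.tendsto_norm_sub_sum_smul_sq ha hM F a

theorem tendsto_norm_sum_smul_sq (F : Finset ι) (d : ι → ℂ) :
    Tendsto (fun n => ‖∑ i ∈ F, d i • e n i‖ ^ 2) atTop (𝓝 (∑ i ∈ F, ‖d i‖ ^ 2)) := by
  simpa using he.tendsto_norm_sub_sum_smul_sq (x := 0) (a := 0) (M := 0) (by simp) (by simp) F d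

theorem exists_tendsto_inner_of_isAsymptApprox (hx : IsAsymptApprox e x) (i : ι) :
    ∃ c, Tendsto (fun n => ⟪e n i, x n⟫_ℂ) atTop (𝓝 c) := by
  refine exists_tendsto_of_forall_eventually_dist_lt fun ε hε => ?_
  obtain ⟨F, d, hFd⟩ := hx (ε / 2) (by positivity)
  refine ⟨_, ⟨_, he.tendsto_inner_sum_smul i F d⟩, ?_⟩
  filter_upwards [hFd, he.eventually_norm_lt_two i] with n hn hei
  rw [dist_eq_norm, ← inner_sub_right]
  calc _ ≤ ‖e n i‖ * ‖x n - ∑ j ∈ F, d j • e n j‖ := norm_inner_le_norm _ _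
    _ < 2 * (ε / 2) := mul_lt_mul'' hei hn (norm_nonneg _) (norm_nonneg _)
    _ = ε := by ring

theorem exists_tendsto_norm_of_isAsymptApprox (hx : IsAsymptApprox e x) :
    ∃ l, Tendsto (fun n => ‖x n‖) atTop (𝓝 l) := by
  refine exists_tendsto_of_forall_eventually_dist_lt fun ε hε => ?_
  obtain ⟨F, d, hFd⟩ := hx ε hε
  refine ⟨fun n => ‖∑ i ∈ F, d i • e n i‖, ⟨Real.sqrt (∑ i ∈ F, ‖d i‖ ^ 2), ?_⟩, ?_⟩
  · simpa only [Real.sqrt_sq (norm_nonneg _)] using (he.tendsto_norm_sum_smul_sq F d).sqrt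
  · filter_upwards [hFd] with n hn
    exact (abs_norm_sub_norm_le _ _).trans_lt hn

theorem hasSum_of_isAsymptApprox (hx : IsAsymptApprox e x)
    (ha : ∀ i, Tendsto (fun n => ⟪e n i, x n⟫_ℂ) atTop (𝓝 (a i)))
    (hM : Tendsto (fun n => ‖x n‖ ^ 2) atTop (𝓝 M)) : HasSum (fun i => ‖a i‖ ^ 2) M := by
  have bessel : ∀ F : Finset ι, ∑ i ∈ F, ‖a i‖ ^ 2 ≤ M := fun F =>
    sub_nonneg.1 <| ge_of_tendsto' (he.tendsto_norm_sub_sum_coeff_smul_sq ha hM F) fun n => by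
      positivity
  have almost : ∀ δ > 0, ∃ F : Finset ι, M - δ ≤ ∑ i ∈ F, ‖a i‖ ^ 2 := fun δ hδ => by
    obtain ⟨F, d, hFd⟩ := hx (Real.sqrt δ) (Real.sqrt_pos.2 hδ)
    have h := le_of_tendsto (he.tendsto_norm_sub_sum_smul_sq ha hM F d) <| hFd.mono fun n hn =>
      ((Real.lt_sqrt (norm_nonneg _)).1 hn).le
    have : 0 ≤ ∑ i ∈ F, ‖d i - a i‖ ^ 2 := by positivity
    exact ⟨F, by linarith⟩
  refine hasSum_of_isLUB_of_nonneg _ (fun i => by positivity) ⟨?_, fun b hb => ?_⟩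
  · rintro _ ⟨F, rfl⟩
    exact bessel F
  · refine le_of_forall_pos_le_add fun δ hδ => ?_
    obtain ⟨F, hF⟩ := almost δ hδ
    linarith [hb ⟨F, rfl⟩]

theorem exists_hasSum_of_isAsymptApprox (hx : IsAsymptApprox e x) :
    ∃ (a : ι → ℂ) (M : ℝ), (∀ i, Tendsto (fun n => ⟪e n i, x n⟫_ℂ) atTop (𝓝 (a i))) ∧
      Tendsto (fun n => ‖x n‖ ^ 2) atTop (𝓝 M) ∧ HasSum (fun i => ‖a i‖ ^ 2) M := by
  choose a ha using he.exists_tendsto_inner_of_isAsymptApprox hx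
  obtain ⟨l, hl⟩ := he.exists_tendsto_norm_of_isAsymptApprox hx
  exact ⟨a, l ^ 2, ha, hl.pow 2, he.hasSum_of_isAsymptApprox hx ha (hl.pow 2)⟩

theorem isAsymptApprox_of_hasSum (ha : ∀ i, Tendsto (fun n => ⟪e n i, x n⟫_ℂ) atTop (𝓝 (a i)))
    (hM : Tendsto (fun n => ‖x n‖ ^ 2) atTop (𝓝 M)) (hsum : HasSum (fun i => ‖a i‖ ^ 2) M) :
    IsAsymptApprox e x := by
  intro ε hε
  obtain ⟨F, hF⟩ := (hsum.eventually (lt_mem_nhds (by nlinarith : M - ε ^ 2 < M))).exists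
  refine ⟨F, a, ?_⟩
  have h := he.tendsto_norm_sub_sum_coeff_smul_sq ha hM F
  filter_upwards [h.eventually (gt_mem_nhds (by linarith : M - ∑ i ∈ F, ‖a i‖ ^ 2 < ε ^ 2))]
    with n hn
  exact lt_of_pow_lt_pow_left₀ 2 hε.le hn

theorem isAsymptApprox_iff :
    IsAsymptApprox e x ↔
      ∃ (a : ι → ℂ) (M : ℝ), (∀ i, Tendsto (fun n => ⟪e n i, x n⟫_ℂ) atTop (𝓝 (a i))) ∧
        Tendsto (fun n => ‖x n‖ ^ 2) atTop (𝓝 M) ∧ HasSum (fun i => ‖a i‖ ^ 2) M :=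
  ⟨he.exists_hasSum_of_isAsymptApprox, fun ⟨_, _, ha, hM, hsum⟩ =>
    he.isAsymptApprox_of_hasSum ha hM hsum⟩

end IsAsymptOrthonormal

end AsymptoticallyOrthonormal

namespace MAP

section Characters

variable {G : Type*} [AddCommGroup G] [TopologicalSpace G]

theorem norm_char_apply (χ : Char G) (t : G) : ‖(χ : C(G, ℂ)) t‖ = 1 := χ.2.1 t

theorem char_apply_add (χ : Char G) (s t : G) :
    (χ : C(G, ℂ)) (s + t) = (χ : C(G, ℂ)) s * (χ : C(G, ℂ)) t := χ.2.2 s t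

theorem conj_char_mul_self (χ : Char G) (t : G) :
    conj ((χ : C(G, ℂ)) t) * (χ : C(G, ℂ)) t = 1 := by
  rw [RCLike.conj_mul, norm_char_apply]
  simp

def trigSum (F : Finset (Char G)) (d : Char G → ℂ) : G → ℂ :=
  fun x => ∑ χ ∈ F, d χ * (χ : C(G, ℂ)) x

theorem isTrigPoly_iff {P : G → ℂ} : IsTrigPoly P ↔ ∃ F d, P = trigSum F d := by
  classical
  constructor
  · rintro ⟨m, c, χ, rfl⟩
    refine ⟨Finset.univ.image χ, fun ψ => ∑ i with χ i = ψ, c i, funext fun x => ?_⟩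
    rw [trigSum, ← Finset.sum_fiberwise_of_maps_to fun i _ => Finset.mem_image_of_mem χ
      (Finset.mem_univ i)]
    refine Finset.sum_congr rfl fun ψ _ => ?_
    rw [Finset.sum_mul]
    exact Finset.sum_congr rfl fun i hi => by rw [(Finset.mem_filter.1 hi).2]
  · rintro ⟨F, d, rfl⟩
    refine ⟨F.card, fun i => d (F.equivFin.symm i), fun i => F.equivFin.symm i, funext fun x => ?_⟩
    rw [trigSum, ← Finset.sum_attach F, ← Finset.univ_eq_attach]
    exact Fintype.sum_equiv F.equivFin _ _ fun χ => by simp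

end Characters

section Averages

variable {α : Type*} [MeasurableSpace α] {θ : Measure α}

theorem integral_cond_eq_cAvg (S : Set α) (g : α → ℂ) : ∫ x, g x ∂θ[|S] = cAvg θ S g := by
  rw [ProbabilityTheory.cond, integral_smul_measure, cAvg, ENNReal.toReal_inv, div_eq_inv_mul,
    Complex.real_smul, Complex.ofReal_inv]

theorem enorm_cAvg {S : Set α} (hS : θ S ≠ 0) (g : α → ℂ) :
    ‖cAvg θ S g‖ₑ = (θ S)⁻¹ * ‖∫ x in S, g x ∂θ‖ₑ := by
  rw [← integral_cond_eq_cAvg, ProbabilityTheory.cond, integral_smul_measure, enorm_smul,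
    Real.enorm_eq_ofReal ENNReal.toReal_nonneg, ENNReal.ofReal_toReal (ENNReal.inv_ne_top.2 hS)]

theorem norm_toLp_cond_sq {S : Set α} {g : α → ℂ} (hg : MemLp g 2 θ[|S]) :
    ‖hg.toLp g‖ ^ 2 = (∫ t in S, ‖g t‖ ^ 2 ∂θ) / (θ S).toReal := by
  rw [norm_toLp_sq, ProbabilityTheory.cond, integral_smul_measure, ENNReal.toReal_inv,
    smul_eq_mul, div_eq_inv_mul]

theorem lpAvg_two_eq_eLpNorm (S : Set α) (g : α → ℂ) :
    lpAvg θ S 2 g = eLpNorm g 2 θ[|S] ^ (2 : ℝ) := by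
  have h := eLpNorm_nnreal_pow_eq_lintegral (f := g) (μ := θ[|S]) (p := 2) two_ne_zero
  simp only [ENNReal.coe_ofNat, NNReal.coe_ofNat] at h
  rw [h, ProbabilityTheory.cond, lintegral_smul_measure, lpAvg, ENNReal.div_eq_inv_mul]
  congr 1
  refine lintegral_congr fun t => ?_
  rw [← ENNReal.ofReal_rpow_of_nonneg (norm_nonneg _) zero_le_two, ofReal_norm]

theorem besSN_two_eq_limsup (A : ℕ → Set α) (g : α → ℂ) :
    besSN θ A 2 g = limsup (fun n => eLpNorm g 2 θ[|A n]) atTop := by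
  have h := (ENNReal.orderIsoRpow (1 / 2) (by norm_num)).limsup_apply
    (u := fun n => eLpNorm g 2 θ[|A n] ^ (2 : ℝ)) (f := atTop)
  simp only [ENNReal.orderIsoRpow_apply, ← ENNReal.rpow_mul] at h
  simp only [besSN, lpAvg_two_eq_eLpNorm]
  norm_num at h ⊢
  exact h

end Averages

theorem MemLpLoc.memLp_restrict {α : Type*} [TopologicalSpace α] [MeasurableSpace α]
    {θ : Measure α} {g : α → ℂ} (hg : MemLpLoc θ 2 g) {K : Set α} (hK : IsCompact K) :
    MemLp g 2 (θ.restrict K) := by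
  refine (memLp_two_iff_integrable_sq_norm hg.1.restrict).2 ⟨hg.1.restrict.norm.pow 2, ?_⟩
  refine (hasFiniteIntegral_iff_ofReal (ae_of_all _ fun t => by positivity)).2 ?_
  simpa only [Real.rpow_two] using hg.2 K hK

theorem MemLpLoc.memLp_cond {α : Type*} [TopologicalSpace α] [MeasurableSpace α]
    {θ : Measure α} {g : α → ℂ} (hg : MemLpLoc θ 2 g) {S : Set α}
    (hS : IsCompact (closure S)) (hS0 : θ S ≠ 0) : MemLp g 2 θ[|S] :=
  ((hg.memLp_restrict hS).mono_measure (Measure.restrict_mono subset_closure le_rfl)).smul_measure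
    (ENNReal.inv_ne_top.2 hS0)

section CharLp

variable {G : Type*} [AddCommGroup G] [TopologicalSpace G] [MeasurableSpace G]
  [OpensMeasurableSpace G]

theorem memLp_char (θ : Measure G) [IsFiniteMeasure θ] (χ : Char G) :
    MemLp (χ : C(G, ℂ)) 2 θ :=
  MemLp.of_bound (χ : C(G, ℂ)).continuous.aestronglyMeasurable 1
    (ae_of_all _ fun t => (norm_char_apply χ t).le)

def charLp (θ : Measure G) [IsFiniteMeasure θ] (χ : Char G) : Lp ℂ 2 θ :=
  (memLp_char θ χ).toLp _

theorem memLp_trigSum (θ : Measure G) [IsFiniteMeasure θ] (F : Finset (Char G))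
    (d : Char G → ℂ) : MemLp (trigSum F d) 2 θ :=
  memLp_finsetSum F fun χ _ => (memLp_char θ χ).const_mul (d χ)

theorem toLp_trigSum (θ : Measure G) [IsFiniteMeasure θ] (F : Finset (Char G))
    (d : Char G → ℂ) : (memLp_trigSum θ F d).toLp _ = ∑ χ ∈ F, d χ • charLp θ χ := by
  classical
  induction F using Finset.induction_on with
  | empty =>
    rw [Finset.sum_empty, Lp.eq_zero_iff_ae_eq_zero]
    filter_upwards [MemLp.coeFn_toLp (memLp_trigSum θ ∅ d)] with x hx
    simp [hx, trigSum]
  | insert χ F hχ ih =>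
    rw [Finset.sum_insert hχ, ← ih]
    exact (MemLp.toLp_eq_toLp_iff _ (((memLp_char θ χ).const_smul (d χ)).add
      (memLp_trigSum θ F d))).2 (ae_of_all _ fun x => by simp [trigSum, Finset.sum_insert hχ])

theorem inner_charLp_toLp_cond {θ : Measure G} {S : Set G} (χ : Char G) {g : G → ℂ}
    (hg : MemLp g 2 θ[|S]) :
    ⟪charLp θ[|S] χ, hg.toLp g⟫_ℂ = cAvg θ S fun t => conj ((χ : C(G, ℂ)) t) * g t := by
  rw [charLp, inner_toLp_toLp, integral_cond_eq_cAvg]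

theorem besSN_two_sub_trigSum_eq {θ : Measure G} {A : ℕ → Set G} {f : G → ℂ}
    (hf : ∀ n, MemLp f 2 θ[|A n]) (F : Finset (Char G)) (d : Char G → ℂ) :
    besSN θ A 2 (fun x => f x - trigSum F d x)
      = limsup (fun n => ‖(hf n).toLp f - ∑ χ ∈ F, d χ • charLp θ[|A n] χ‖ₑ) atTop := by
  rw [besSN_two_eq_limsup]
  congr 1
  funext n
  rw [← toLp_trigSum, ← MemLp.toLp_sub, Lp.enorm_toLp]
  rfl

end CharLp

theorem symmDiff_vadd_subset_kBoundary {G : Type*} [AddCommGroup G] [TopologicalSpace G]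
    (s : G) (S : Set G) : (s +ᵥ S) ∆ S ⊆ kBoundary {s, -s} S := by
  rintro x (⟨⟨y, hy, rfl⟩, hyS⟩ | ⟨hx, hxs⟩)
  · refine Or.inl ⟨subset_closure ?_, hyS⟩
    show s + y ∈ _
    rw [add_comm s y]
    exact Set.add_mem_add hy (Set.mem_insert _ _)
  · refine Or.inr ⟨⟨x - s, fun h => hxs ⟨x - s, h, ?_⟩, -s, by simp, by simp⟩, subset_closure hx⟩
    simp [vadd_eq_add]

namespace IsVanHove

variable {G : Type*} [AddCommGroup G] [TopologicalSpace G] [MeasurableSpace G] {θ : Measure G}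
  {A : ℕ → Set G} (hA : IsVanHove θ A)
include hA

theorem measure_ne_zero [θ.IsOpenPosMeasure] (n : ℕ) : θ (A n) ≠ 0 :=
  (hA.isOpen n).measure_ne_zero θ (hA.nonempty n)

theorem measure_ne_top [IsFiniteMeasureOnCompacts θ] (n : ℕ) : θ (A n) ≠ ⊤ :=
  ((measure_mono subset_closure).trans_lt (hA.relCompact n).measure_lt_top).ne

theorem tendsto_measure_symmDiff_vadd_div (s : G) :
    Tendsto (fun n => θ ((s +ᵥ A n) ∆ A n) / θ (A n)) atTop (𝓝 0) :=
  tendsto_of_tendsto_of_tendsto_of_le_of_le tendsto_const_nhds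
    (hA.boundary _ (Set.toFinite _).isCompact) (fun _ => zero_le) fun n =>
      ENNReal.div_le_div_right (measure_mono (symmDiff_vadd_subset_kBoundary s (A n))) _

theorem bapMem_two_iff [OpensMeasurableSpace G] [θ.IsOpenPosMeasure] {f : G → ℂ}
    (hf : MemLpLoc θ 2 f) :
    BapMem θ A 2 f ↔ IsAsymptApprox (fun n => charLp θ[|A n])
      fun n => (hf.memLp_cond (hA.relCompact n) (hA.measure_ne_zero n)).toLp f := by
  have hfn n := hf.memLp_cond (hA.relCompact n) (hA.measure_ne_zero n)
  constructor
  · rintro ⟨-, happrox⟩ ε hε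
    obtain ⟨P, hP, hPε⟩ := happrox ε hε
    obtain ⟨F, d, rfl⟩ := isTrigPoly_iff.1 hP
    rw [besSN_two_sub_trigSum_eq hfn] at hPε
    refine ⟨F, d, (eventually_lt_of_limsup_lt hPε).mono fun n hn => ?_⟩
    rwa [← ofReal_norm, ENNReal.ofReal_lt_ofReal_iff hε] at hn
  · intro happrox
    refine ⟨hf, fun ε hε => ?_⟩
    obtain ⟨F, d, hFd⟩ := happrox (ε / 2) (by positivity)
    refine ⟨trigSum F d, isTrigPoly_iff.2 ⟨F, d, rfl⟩, ?_⟩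
    rw [besSN_two_sub_trigSum_eq hfn]
    refine (limsup_le_of_le (a := ENNReal.ofReal (ε / 2)) (by isBoundedDefault)
      (hFd.mono fun n hn => ?_)).trans_lt ((ENNReal.ofReal_lt_ofReal_iff hε).2 (by linarith))
    rw [← ofReal_norm]
    exact ENNReal.ofReal_le_ofReal hn.le

variable [OpensMeasurableSpace G] [MeasurableAdd G] [θ.IsAddLeftInvariant] [θ.IsOpenPosMeasure]
  [IsFiniteMeasureOnCompacts θ]

theorem tendsto_cAvg_of_map_add {g : G → ℂ} (hgm : AEStronglyMeasurable g θ)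
    (hg1 : ∀ x, ‖g x‖ ≤ 1) (hg : ∀ x y, g (x + y) = g x * g y) {s : G} (hs : g s ≠ 1) :
    Tendsto (fun n => cAvg θ (A n) g) atTop (𝓝 0) := by
  have hc : ‖g s - 1‖ₑ ≠ 0 := enorm_ne_zero.2 (sub_ne_zero.2 hs)
  -- `(g s - 1) * ∫_{A n} g = ∫_{s +ᵥ A n} g - ∫_{A n} g` is at most `θ ((s +ᵥ A n) ∆ A n)`
  have hbound : ∀ n, ‖cAvg θ (A n) g‖ₑ ≤ θ ((s +ᵥ A n) ∆ A n) / θ (A n) / ‖g s - 1‖ₑ := by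
    intro n
    have h := enorm_setIntegral_sub_setIntegral_le hgm hg1
      ((hA.isOpen n).measurableSet.const_vadd s) (hA.isOpen n).measurableSet
      (by rw [measure_vadd]; exact hA.measure_ne_top n) (hA.measure_ne_top n)
    rw [setIntegral_vadd_of_map_add hg, ← sub_one_mul, enorm_mul, mul_comm,
      ← ENNReal.le_div_iff_mul_le (Or.inl hc) (Or.inl enorm_ne_top)] at h
    rw [enorm_cAvg (hA.measure_ne_zero n), ENNReal.div_right_comm, ENNReal.div_eq_inv_mul]
    gcongr
  refine tendsto_zero_iff_enorm_tendsto_zero.2 <| tendsto_of_tendsto_of_tendsto_of_le_of_le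
    tendsto_const_nhds ?_ (fun _ => zero_le) hbound
  simpa using ENNReal.Tendsto.div_const (hA.tendsto_measure_symmDiff_vadd_div s) (Or.inr hc)

open scoped Classical in
theorem tendsto_cAvg_conj_char_mul (χ ψ : Char G) :
    Tendsto (fun n => cAvg θ (A n) fun t => conj ((χ : C(G, ℂ)) t) * (ψ : C(G, ℂ)) t) atTop
      (𝓝 (if χ = ψ then 1 else 0)) := by
  by_cases hχψ : χ = ψ
  · subst hχψ
    refine tendsto_const_nhds.congr fun n => ?_
    have := ProbabilityTheory.cond_isProbabilityMeasure_of_finite (hA.measure_ne_zero n)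
      (hA.measure_ne_top n)
    simp [conj_char_mul_self, ← integral_cond_eq_cAvg]
  obtain ⟨s, hs⟩ : ∃ s, (χ : C(G, ℂ)) s ≠ (ψ : C(G, ℂ)) s := by
    by_contra! h
    exact hχψ (Subtype.ext (ContinuousMap.ext h))
  rw [if_neg hχψ]
  refine hA.tendsto_cAvg_of_map_add
    ((Complex.continuous_conj.comp (χ : C(G, ℂ)).continuous).mul
      (ψ : C(G, ℂ)).continuous).aestronglyMeasurable
    (fun t => by rw [norm_mul, RCLike.norm_conj, norm_char_apply, norm_char_apply, one_mul])
    (fun x y => by rw [char_apply_add, char_apply_add, map_mul]; ring) (s := s) fun h => hs ?_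
  calc (χ : C(G, ℂ)) s = (χ : C(G, ℂ)) s * (conj ((χ : C(G, ℂ)) s) * (ψ : C(G, ℂ)) s) := by
        rw [h, mul_one]
    _ = (ψ : C(G, ℂ)) s := by rw [← mul_assoc, mul_comm _ (conj _), conj_char_mul_self, one_mul]

open scoped Classical in
theorem isAsymptOrthonormal_charLp : IsAsymptOrthonormal fun n => charLp θ[|A n] := fun χ ψ => by
  simpa only [charLp, inner_toLp_toLp, integral_cond_eq_cAvg] using
    hA.tendsto_cAvg_conj_char_mul χ ψ

end IsVanHove

end MAP

theorem statement11_general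
    {G : Type*} [AddCommGroup G] [TopologicalSpace G] [IsTopologicalAddGroup G]
    [MeasurableSpace G] [BorelSpace G]
    (θ : Measure G) [θ.IsAddHaarMeasure]
    (A : ℕ → Set G) (hA : IsVanHove θ A)
    (f : G → ℂ) (hf : MemLpLoc θ 2 f) :
    BapMem θ A 2 f ↔
      ∃ (a : Char G → ℂ) (M : ℝ),
        (∀ χ : Char G, FBTendsto θ A f χ (a χ)) ∧
        Tendsto (fun n => (∫ t in A n, ‖f t‖ ^ 2 ∂θ) / (θ (A n)).toReal) atTop (𝓝 M) ∧
        (∑' χ : Char G, ENNReal.ofReal (‖a χ‖ ^ 2)) = ENNReal.ofReal M := by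
  classical
  rw [hA.bapMem_two_iff hf, hA.isAsymptOrthonormal_charLp.isAsymptApprox_iff]
  simp only [inner_charLp_toLp_cond, norm_toLp_cond_sq]
  refine exists₂_congr fun a M => and_congr Iff.rfl (and_congr_right fun hM => ?_)
  exact hasSum_iff_tsum_ofReal_eq (fun _ => sq_nonneg _) (ge_of_tendsto' hM fun n => by positivity)

theorem statement11
    {G : Type*} [AddCommGroup G] [TopologicalSpace G] [IsTopologicalAddGroup G]
    [LocallyCompactSpace G] [SigmaCompactSpace G] [T2Space G]
    [MeasurableSpace G] [BorelSpace G]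
    (θ : Measure G) [θ.IsAddHaarMeasure]
    (A : ℕ → Set G) (hA : IsVanHove θ A)
    (f : G → ℂ) (hf : MemLpLoc θ 2 f) :
    BapMem θ A 2 f ↔
      ∃ (a : Char G → ℂ) (M : ℝ),
        (∀ χ : Char G, FBTendsto θ A f χ (a χ)) ∧
        Tendsto (fun n => (∫ t in A n, ‖f t‖ ^ 2 ∂θ) / (θ (A n)).toReal) atTop (𝓝 M) ∧
        (∑' χ : Char G, ENNReal.ofReal (‖a χ‖ ^ 2)) = ENNReal.ofReal M :=
  statement11_general θ A hA f hf
end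
end
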